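/- arXiv:1809.07643 — 4 statements merged into one kernel-verified Lean document; each statement's English description precedes it below -/
import Mathlib

section
/- For every dimension d ≥ 2 there exists a constant C > 0 such that for every real-valued radial function f ∈ C_c^∞(ℝ^d) and every x ∈ ℝ^d one has |x|^{d-1} f(x)^2 ≤ C ‖f‖_{L²(ℝ^d)} ‖∇f‖_{L²(ℝ^d)}. -/
open MeasureTheory Metric Set

set_option maxHeartbeats 1000000 in
/-- The classical Strauss estimate: for every dimension `d ≥ 2` there is a constant
`C > 0` such that every real-valued radial `f ∈ C_c^∞(ℝ^d)` satisfies
`|x|^(d-1) f(x)^2 ≤ C ‖f‖_{L²} ‖∇f‖_{L²}` for all `x`. -/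
theorem strauss_estimate (d : ℕ) (hd : 2 ≤ d) :
    ∃ C > (0 : ℝ), ∀ f : EuclideanSpace ℝ (Fin d) → ℝ,
      ContDiff ℝ (⊤ : ℕ∞) f → HasCompactSupport f →
      (∀ x y : EuclideanSpace ℝ (Fin d), ‖x‖ = ‖y‖ → f x = f y) →
      ∀ x : EuclideanSpace ℝ (Fin d),
        ‖x‖ ^ (d - 1) * (f x) ^ 2 ≤
          C * (eLpNorm f 2 volume).toReal *
            (eLpNorm (fun y => fderiv ℝ f y) 2 volume).toReal := by
  haveI : NeZero d := ⟨by omega⟩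
  set E := EuclideanSpace ℝ (Fin d) with hE
  set V : ℝ := (volume (ball (0:E) 1)).toReal with hVdef
  have hVpos : 0 < V := ENNReal.toReal_pos (measure_ball_pos _ _ one_pos).ne'
    measure_ball_lt_top.ne
  have hdVpos : 0 < (d : ℝ) * V := by positivity
  refine ⟨2 / ((d : ℝ) * V), by positivity, ?_⟩
  intro f hf hsupp hrad x
  set N₁ : ℝ := (eLpNorm f 2 volume).toReal with hN₁def
  set N₂ : ℝ := (eLpNorm (fun y => fderiv ℝ f y) 2 volume).toReal with hN₂def
  have hN₁ : 0 ≤ N₁ := ENNReal.toReal_nonneg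
  have hN₂ : 0 ≤ N₂ := ENNReal.toReal_nonneg
  rcases eq_or_ne x 0 with rfl | hx0
  · simp only [norm_zero]
    rw [zero_pow (by omega : d - 1 ≠ 0)]
    have : 0 ≤ 2 / ((d : ℝ) * V) * N₁ * N₂ := by positivity
    nlinarith [sq_nonneg (f 0)]
  -- the radial profile g
  set e : E := EuclideanSpace.single (0 : Fin d) (1:ℝ) with he
  have hne : ‖e‖ = 1 := by rw [he, EuclideanSpace.norm_single, norm_one]
  set g : ℝ → ℝ := fun r => f (r • e) with hg
  have hsm : ContDiff ℝ (⊤ : ℕ∞) (fun r : ℝ => r • e) := contDiff_id.smul contDiff_const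
  have hgsmooth : ContDiff ℝ (⊤ : ℕ∞) g := hf.comp hsm
  have hiso : Isometry (fun r : ℝ => r • e) := by
    refine Isometry.of_dist_eq fun a b => ?_
    rw [dist_eq_norm, dist_eq_norm, ← sub_smul, norm_smul, hne, mul_one, Real.norm_eq_abs]
  have hgsupp : HasCompactSupport g :=
    hsupp.comp_isClosedEmbedding hiso.isClosedEmbedding
  have hfx : ∀ y : E, f y = g ‖y‖ := by
    intro y
    refine hrad y (‖y‖ • e) ?_
    rw [norm_smul, hne, mul_one, Real.norm_eq_abs, abs_of_nonneg (norm_nonneg y)]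
  have hgd : ∀ r : ℝ, HasDerivAt g (deriv g r) r :=
    fun r => ((hgsmooth.differentiable (by simp)) r).hasDerivAt
  have hgc : Continuous g := hgsmooth.continuous
  have hgdc : Continuous (deriv g) := hgsmooth.continuous_deriv (by simp)
  -- derivative identity along rays
  have hray : ∀ u : E, ‖u‖ = 1 → ∀ r : ℝ, deriv g r = fderiv ℝ f (r • u) u := by
    intro u hu r
    have heq : (fun t : ℝ => f (t • u)) = g := by
      funext t
      refine hrad (t • u) (t • e) ?_
      rw [norm_smul, norm_smul, hu, hne]
    have hd1 : HasDerivAt (fun t : ℝ => t • u) ((1:ℝ) • u) r := (hasDerivAt_id r).smul_const u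
    have hd2 : HasDerivAt (fun t : ℝ => f (t • u)) (fderiv ℝ f (r • u) ((1:ℝ) • u)) r :=
      ((hf.differentiable (by simp) (r • u)).hasFDerivAt).comp_hasDerivAt r hd1
    rw [heq] at hd2
    rw [hd2.deriv, one_smul]
  have hderiv_bound : ∀ y : E, |deriv g ‖y‖| ≤ ‖fderiv ℝ f y‖ := by
    intro y
    rcases eq_or_ne y 0 with rfl | hy0
    · rw [norm_zero, hray e hne 0]
      simpa [hne] using ((fderiv ℝ f ((0:ℝ) • e)).le_opNorm e).trans_eq (by simp [hne])
    · set u : E := ‖y‖⁻¹ • y with hu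
      have hyn : ‖y‖ ≠ 0 := norm_ne_zero_iff.2 hy0
      have hun : ‖u‖ = 1 := by
        rw [hu, norm_smul, norm_inv, norm_norm, inv_mul_cancel₀ hyn]
      have hyu : ‖y‖ • u = y := by
        rw [hu, smul_smul, mul_inv_cancel₀ hyn, one_smul]
      rw [hray u hun ‖y‖, hyu]
      calc |fderiv ℝ f y u| ≤ ‖fderiv ℝ f y‖ * ‖u‖ := (fderiv ℝ f y).le_opNorm u
        _ = ‖fderiv ℝ f y‖ := by rw [hun, mul_one]
  -- the radial integrand k
  set k : ℝ → ℝ := fun r => |g r| * |deriv g r| with hk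
  have hkc : Continuous k := (hgc.abs).mul (hgdc.abs)
  have hknn : ∀ r, 0 ≤ k r := fun r => mul_nonneg (abs_nonneg _) (abs_nonneg _)
  have hksupp : HasCompactSupport k := by
    have h1 : HasCompactSupport (abs ∘ g) := hgsupp.comp_left abs_zero
    exact h1.mul_right
  -- polar coordinates
  set A : ℝ := ∫ y in Ioi (0:ℝ), y ^ (d - 1) * k y with hA
  have hpolar : ∫ y : E, k ‖y‖ ∂volume = (d : ℝ) * V * A := by
    have := integral_fun_norm_addHaar (volume : Measure E) k
    rw [finrank_euclideanSpace_fin] at this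
    rw [this, hA]
    simp only [nsmul_eq_mul, smul_eq_mul, hVdef, measureReal_def]
    ring
  -- integrability facts
  have hkM : ∃ M : ℝ, 0 < M ∧ ∀ r : ℝ, M ≤ |r| → k r = 0 := by
    obtain ⟨M, hM⟩ := (hksupp.isBounded).subset_closedBall 0
    refine ⟨|M| + 1, by positivity, fun r hr => ?_⟩
    apply image_eq_zero_of_notMem_tsupport
    intro hmem
    have := hM hmem
    rw [mem_closedBall, Real.dist_eq, sub_zero] at this
    have := le_abs_self M
    linarith
  have hknorm_supp : HasCompactSupport (fun y : E => k ‖y‖) := by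
    obtain ⟨M, hMpos, hM⟩ := hkM
    refine HasCompactSupport.intro (isCompact_closedBall (0:E) M) fun y hy => ?_
    apply hM
    rw [mem_closedBall, dist_zero_right, not_le] at hy
    rw [abs_of_nonneg (norm_nonneg y)]
    exact hy.le
  have hInt1 : Integrable (fun y : E => k ‖y‖) volume :=
    (hkc.comp continuous_norm).integrable_of_hasCompactSupport hknorm_supp
  have hDfc : Continuous (fun y : E => fderiv ℝ f y) := hf.continuous_fderiv (by simp)
  have hInt2 : Integrable (fun y : E => |f y| * ‖fderiv ℝ f y‖) volume := by
    apply Continuous.integrable_of_hasCompactSupport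
    · exact (hf.continuous.abs).mul hDfc.norm
    · have h1 : HasCompactSupport (abs ∘ f) := hsupp.comp_left abs_zero
      exact h1.mul_right
  -- pointwise bound and Hölder
  have hptwise : ∀ y : E, k ‖y‖ ≤ |f y| * ‖fderiv ℝ f y‖ := by
    intro y
    have : |g ‖y‖| = |f y| := by rw [hfx y]
    rw [hk]
    simp only []
    rw [this]
    exact mul_le_mul_of_nonneg_left (hderiv_bound y) (abs_nonneg _)
  have hmono : ∫ y : E, k ‖y‖ ∂volume ≤ ∫ y : E, |f y| * ‖fderiv ℝ f y‖ ∂volume :=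
    integral_mono hInt1 hInt2 hptwise
  have hmem₁ : MemLp f 2 (volume : Measure E) :=
    hf.continuous.memLp_of_hasCompactSupport hsupp
  have hmem₂ : MemLp (fun y : E => fderiv ℝ f y) 2 (volume : Measure E) :=
    hDfc.memLp_of_hasCompactSupport (hsupp.fderiv (𝕜 := ℝ))
  have hpq : Real.HolderConjugate 2 2 := Real.HolderConjugate.two_two
  have hholder : ∫ y : E, |f y| * ‖fderiv ℝ f y‖ ∂volume ≤
      (∫ y : E, |f y| ^ (2:ℝ) ∂volume) ^ ((1:ℝ)/2) *
      (∫ y : E, ‖fderiv ℝ f y‖ ^ (2:ℝ) ∂volume) ^ ((1:ℝ)/2) := by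
    refine integral_mul_le_Lp_mul_Lq_of_nonneg hpq ?_ ?_ ?_ ?_
    · exact Filter.Eventually.of_forall fun y => abs_nonneg _
    · exact Filter.Eventually.of_forall fun y => norm_nonneg _
    · simpa [ENNReal.ofReal_ofNat] using hmem₁.norm
    · simpa [ENNReal.ofReal_ofNat] using hmem₂.norm
  have hN₁eq : N₁ = (∫ y : E, |f y| ^ (2:ℝ) ∂volume) ^ ((1:ℝ)/2) := by
    rw [hN₁def, hmem₁.eLpNorm_eq_integral_rpow_norm two_ne_zero ENNReal.ofNat_ne_top]
    rw [ENNReal.toReal_ofReal (by positivity)]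
    norm_num [Real.norm_eq_abs]
    rfl
  have hN₂eq : N₂ = (∫ y : E, ‖fderiv ℝ f y‖ ^ (2:ℝ) ∂volume) ^ ((1:ℝ)/2) := by
    rw [hN₂def, hmem₂.eLpNorm_eq_integral_rpow_norm two_ne_zero ENNReal.ofNat_ne_top]
    rw [ENNReal.toReal_ofReal (by positivity)]
    norm_num
  have hAbound : (d : ℝ) * V * A ≤ N₁ * N₂ := by
    rw [hN₁eq, hN₂eq, ← hpolar]
    exact hmono.trans hholder
  -- FTC part
  set R : ℝ := ‖x‖ with hR
  have hRpos : 0 < R := norm_pos_iff.2 hx0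
  obtain ⟨Mg, hMg⟩ := (hgsupp.isBounded).subset_closedBall 0
  set b : ℝ := max R Mg + 1 with hb
  have hRb : R < b := lt_of_le_of_lt (le_max_left _ _) (by rw [hb]; linarith)
  have hgb : g b = 0 := by
    apply image_eq_zero_of_notMem_tsupport
    intro hmem
    have := hMg hmem
    rw [mem_closedBall, Real.dist_eq, sub_zero] at this
    have h1 : b ≤ |b| := le_abs_self b
    have h2 : Mg ≤ max R Mg := le_max_right _ _
    linarith
  set φ : ℝ → ℝ := fun r => r ^ (d-1) * g r ^ 2 with hφdef
  set F' : ℝ → ℝ := fun r =>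
    (↑(d-1) * r ^ (d-1-1)) * g r ^ 2 + r ^ (d-1) * ((2:ℕ) * g r ^ (2-1) * deriv g r) with hF'
  have hφderiv : ∀ r : ℝ, HasDerivAt φ (F' r) r :=
    fun r => (hasDerivAt_pow (d-1) r).mul ((hgd r).pow 2)
  have hF'c : Continuous F' := by
    apply Continuous.add
    · exact ((continuous_const.mul (continuous_pow _)).mul (hgc.pow 2))
    · exact (continuous_pow _).mul ((continuous_const.mul (hgc.pow 1)).mul hgdc)
  have hFTC : ∫ r in R..b, F' r = φ b - φ R :=
    intervalIntegral.integral_eq_sub_of_hasDerivAt (fun r _ => hφderiv r)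
      (hF'c.intervalIntegrable _ _)
  have hφb : φ b = 0 := by rw [hφdef]; simp [hgb]
  have hbound : φ R ≤ ∫ r in R..b, 2 * r ^ (d-1) * k r := by
    have h1 : φ R = ∫ r in R..b, -F' r := by
      rw [intervalIntegral.integral_neg, hFTC, hφb]; ring
    rw [h1]
    apply intervalIntegral.integral_mono_on hRb.le
      (hF'c.neg.intervalIntegrable _ _)
      (((continuous_const.mul (continuous_pow _)).mul hkc).intervalIntegrable _ _)
    intro r hr
    have hr0 : 0 < r := lt_of_lt_of_le hRpos hr.1
    have h2 : 0 ≤ (↑(d-1) : ℝ) * r ^ (d-1-1) * g r ^ 2 := by positivity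
    have h3 : 0 ≤ r ^ (d-1) := by positivity
    have h4 : -(g r * deriv g r) ≤ |g r| * |deriv g r| := by
      rw [← abs_mul]; exact neg_le_abs _
    rw [hF', hk]
    norm_num
    nlinarith [mul_le_mul_of_nonneg_left h4 h3, h2]
  have h2A : ∫ r in R..b, 2 * r ^ (d-1) * k r ≤ 2 * A := by
    rw [intervalIntegral.integral_of_le hRb.le]
    have htot : Integrable (fun r : ℝ => 2 * r ^ (d-1) * k r) volume := by
      apply Continuous.integrable_of_hasCompactSupport
        ((continuous_const.mul (continuous_pow _)).mul hkc)
      exact hksupp.mul_left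
    have hsub : Ioc R b ⊆ Ioi (0:ℝ) := fun r hr => lt_of_lt_of_le hRpos hr.1.le
    calc ∫ r in Ioc R b, 2 * r ^ (d-1) * k r
        ≤ ∫ r in Ioi (0:ℝ), 2 * r ^ (d-1) * k r := by
          apply setIntegral_mono_set htot.integrableOn
          · filter_upwards [ae_restrict_mem measurableSet_Ioi] with r hr
            have : (0:ℝ) < r := hr
            positivity
          · exact HasSubset.Subset.eventuallyLE hsub
      _ = 2 * A := by
        rw [hA, ← MeasureTheory.integral_const_mul]
        congr 1
        funext r
        ring
  -- conclude
  have hfinal : φ R ≤ 2 / ((d : ℝ) * V) * N₁ * N₂ := by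
    have h2 : 2 * A ≤ 2 / ((d : ℝ) * V) * N₁ * N₂ := by
      rw [div_mul_eq_mul_div, div_mul_eq_mul_div, le_div_iff₀ hdVpos]
      nlinarith
    linarith [hbound.trans h2A]
  calc ‖x‖ ^ (d-1) * f x ^ 2 = φ R := by rw [hφdef, hR, hfx x]
    _ ≤ _ := hfinal
end

section
/- Let d ≥ 2 be a natural number, let A : (0,∞) → ℝ be twice continuously differentiable with A(r) > 0 for all r > 0, and let f ∈ C²((0,∞)). Define g(r) := (r/A(r))^{(d-1)/2} f(r). Then for all r > 0, g''(r) + (d-1)(A'(r)/A(r)) g'(r) = (r/A(r))^{(d-1)/2} [ f''(r) + ((d-1)/r) f'(r) − V(r) f(r) ], where V(r) := ((d-1)/2)(A''(r)/A(r)) + ((d-1)(d-3)/4)(A'(r)²/A(r)² − 1/r²). -/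
/-- Conjugation of the radial warped-product Laplacian `∂_r² + (d-1)(A'/A)∂_r` by the
weight `(r/A(r))^((d-1)/2)` yields the radial Euclidean Laplacian plus the potential
`V(r) = ((d-1)/2)(A''/A) + ((d-1)(d-3)/4)(A'²/A² − 1/r²)`. -/
theorem conjugation_to_euclidean (d : ℕ) (hd : 2 ≤ d)
    (A A' A'' f f' f'' : ℝ → ℝ)
    (hA : ∀ r > (0 : ℝ), HasDerivAt A (A' r) r)
    (hA' : ∀ r > (0 : ℝ), HasDerivAt A' (A'' r) r)
    (hA''cont : ContinuousOn A'' (Set.Ioi 0))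
    (hApos : ∀ r > (0 : ℝ), 0 < A r)
    (hf : ∀ r > (0 : ℝ), HasDerivAt f (f' r) r)
    (hf' : ∀ r > (0 : ℝ), HasDerivAt f' (f'' r) r)
    (hf''cont : ContinuousOn f'' (Set.Ioi 0))
    (g : ℝ → ℝ)
    (hg : ∀ r > (0 : ℝ), g r = (r / A r) ^ (((d : ℝ) - 1) / 2) * f r)
    (V : ℝ → ℝ)
    (hV : ∀ r > (0 : ℝ), V r = ((d : ℝ) - 1) / 2 * (A'' r / A r)
        + ((d : ℝ) - 1) * ((d : ℝ) - 3) / 4 * ((A' r) ^ 2 / (A r) ^ 2 - 1 / r ^ 2)) :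
    ∀ r > (0 : ℝ),
      deriv (deriv g) r + ((d : ℝ) - 1) * (A' r / A r) * deriv g r
        = (r / A r) ^ (((d : ℝ) - 1) / 2) *
            (f'' r + ((d : ℝ) - 1) / r * f' r - V r * f r) := by
  set α : ℝ := ((d : ℝ) - 1) / 2 with hαdef
  set u : ℝ → ℝ := fun s => s / A s with hudef
  set u' : ℝ → ℝ := fun s => (1 * A s - s * A' s) / (A s) ^ 2 with hu'def
  have hupos : ∀ s > (0 : ℝ), 0 < u s := fun s hs => div_pos hs (hApos s hs)
  have hU : ∀ s > (0 : ℝ), HasDerivAt u (u' s) s := by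
    intro s hs
    exact (hasDerivAt_id s).div (hA s hs) (hApos s hs).ne'
  set G1 : ℝ → ℝ := fun s => u' s * α * u s ^ (α - 1) * f s + u s ^ α * f' s with hG1def
  have hGder : ∀ s > (0 : ℝ), HasDerivAt g (G1 s) s := by
    intro s hs
    have hw : HasDerivAt (fun x => u x ^ α) (u' s * α * u s ^ (α - 1)) s :=
      (hU s hs).rpow_const (Or.inl (hupos s hs).ne')
    have hprod := hw.mul (hf s hs)
    have heq : g =ᶠ[nhds s] fun x => u x ^ α * f x := by
      filter_upwards [isOpen_Ioi.mem_nhds hs] with x hx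
      exact hg x hx
    exact hprod.congr_of_eventuallyEq heq
  intro r hr
  have hAr := hApos r hr
  have hur := hupos r hr
  -- deriv g = G1 on a neighborhood of r
  have hderivg : deriv g =ᶠ[nhds r] G1 := by
    filter_upwards [isOpen_Ioi.mem_nhds hr] with x hx
    exact (hGder x hx).deriv
  -- second derivative of numerator pieces
  set u'' : ℝ → ℝ :=
    fun s => ((1 * A' s - (1 * A' s + s * A'' s)) * (A s) ^ 2
      - (1 * A s - s * A' s) * (2 * A s ^ 1 * A' s)) / ((A s) ^ 2) ^ 2 with hu''def
  have hU' : HasDerivAt u' (u'' r) r := by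
    have hnum : HasDerivAt (fun s => 1 * A s - s * A' s)
        (1 * A' r - (1 * A' r + r * A'' r)) r := by
      exact ((hA r hr).const_mul 1).sub ((hasDerivAt_id r).mul (hA' r hr))
    have hden : HasDerivAt (fun s => (A s) ^ 2) (2 * A r ^ 1 * A' r) r := (hA r hr).pow 2
    have hden0 : (A r) ^ 2 ≠ 0 := pow_ne_zero 2 hAr.ne'
    exact hnum.div hden hden0
  have hc2 : HasDerivAt (fun s => u s ^ (α - 1))
      (u' r * (α - 1) * u r ^ (α - 1 - 1)) r :=
    (hU r hr).rpow_const (Or.inl hur.ne')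
  have hc5 : HasDerivAt (fun s => u s ^ α) (u' r * α * u r ^ (α - 1)) r :=
    (hU r hr).rpow_const (Or.inl hur.ne')
  have hG1der : HasDerivAt G1
      ((u'' r * α * u r ^ (α - 1) + u' r * α * (u' r * (α - 1) * u r ^ (α - 1 - 1))) * f r
        + u' r * α * u r ^ (α - 1) * f' r
        + (u' r * α * u r ^ (α - 1) * f' r + u r ^ α * f'' r)) r := by
    have hc1 : HasDerivAt (fun s => u' s * α) (u'' r * α) r := hU'.mul_const α
    have hc3 := hc1.mul hc2
    have hc4 := hc3.mul (hf r hr)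
    have hc6 := hc5.mul (hf' r hr)
    exact hc4.add hc6
  have hD2 : deriv (deriv g) r
      = (u'' r * α * u r ^ (α - 1) + u' r * α * (u' r * (α - 1) * u r ^ (α - 1 - 1))) * f r
        + u' r * α * u r ^ (α - 1) * f' r
        + (u' r * α * u r ^ (α - 1) * f' r + u r ^ α * f'' r) := by
    rw [hderivg.deriv_eq]
    exact hG1der.deriv
  have hD1 : deriv g r = u' r * α * u r ^ (α - 1) * f r + u r ^ α * f' r :=
    (hGder r hr).deriv
  -- rewrite rpow powers in terms of W := u r ^ α
  have hp1 : u r ^ (α - 1) = u r ^ α / u r := by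
    rw [Real.rpow_sub hur, Real.rpow_one]
  have hp2 : u r ^ (α - 1 - 1) = u r ^ α / (u r) ^ 2 := by
    rw [show α - 1 - 1 = α - 2 by ring, Real.rpow_sub hur,
      show (2 : ℝ) = ((2 : ℕ) : ℝ) by norm_num, Real.rpow_natCast]
  rw [hD2, hD1, hV r hr, hp1, hp2]
  have h2α : (d : ℝ) - 1 = 2 * α := by rw [hαdef]; ring
  rw [h2α]
  have hu'val : u' r = (1 * A r - r * A' r) / (A r) ^ 2 := rfl
  have hu''val : u'' r = ((1 * A' r - (1 * A' r + r * A'' r)) * (A r) ^ 2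
      - (1 * A r - r * A' r) * (2 * A r ^ 1 * A' r)) / ((A r) ^ 2) ^ 2 := rfl
  have huval : u r = r / A r := rfl
  rw [hu'val, hu''val, huval]
  have hr0 : r ≠ 0 := hr.ne'
  have hA0 : A r ≠ 0 := hAr.ne'
  field_simp
  ring
end

section
/- Let d ≥ 2, let A : ℝ → ℝ be smooth and odd with A'(0) = 1, and assume there exists c > 0 with A(r) ≥ c r for all r > 0. Fix γ > 0 and define φ(s) := (s/A(s))^{γ} for s > 0, φ(0) := 1, and for α > 0 and x ∈ ℝ^d set q_α(x) := 1 − φ(|x|/α). Then there exists a constant C > 0 such that for all α ≥ 1 and all x ∈ ℝ^d: (i) |q_α(x)| ≤ C; (ii) if |x| ≤ √α then |q_α(x)| ≤ C α^{-1}; (iii) for every M > 0 and every function w : ℝ^d → ℝ satisfying |w(x)| ≤ M (1+|x|²)^{-1} for all x, one has |q_α(x) w(x)| ≤ C M α^{-1} for all x ∈ ℝ^d. -/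
open Set

-- MVT-based Lipschitz bound for rpow on a compact interval away from 0
lemma rpow_lipschitz {γ m M₀ : ℝ} (hγ : 0 < γ) (hm : 0 < m) (hM : m ≤ M₀)
    {a b : ℝ} (ha : a ∈ Icc m M₀) (hb : b ∈ Icc m M₀) :
    |a ^ γ - b ^ γ| ≤ γ * (m ^ (γ - 1) + M₀ ^ (γ - 1)) * |a - b| := by
  have hne : ∀ t ∈ Icc m M₀, t ≠ 0 := fun t ht => (lt_of_lt_of_le hm ht.1).ne'
  have hdiff : ∀ t ∈ Icc m M₀, DifferentiableAt ℝ (fun x : ℝ => x ^ γ) t := fun t ht =>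
    (Real.hasDerivAt_rpow_const (Or.inl (hne t ht))).differentiableAt
  have bound : ∀ t ∈ Icc m M₀, ‖deriv (fun x : ℝ => x ^ γ) t‖ ≤
      γ * (m ^ (γ - 1) + M₀ ^ (γ - 1)) := by
    intro t ht
    have hder : deriv (fun x : ℝ => x ^ γ) t = γ * t ^ (γ - 1) :=
      (Real.hasDerivAt_rpow_const (Or.inl (hne t ht))).deriv
    rw [hder, Real.norm_eq_abs]
    have ht0 : 0 < t := lt_of_lt_of_le hm ht.1
    have h1 : t ^ (γ - 1) ≤ m ^ (γ - 1) + M₀ ^ (γ - 1) := by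
      rcases le_or_gt γ 1 with h | h
      · have := Real.rpow_le_rpow_of_nonpos hm ht.1 (by linarith : γ - 1 ≤ 0)
        have hM0 : (0:ℝ) ≤ M₀ ^ (γ - 1) := Real.rpow_nonneg (by linarith) _
        linarith
      · have := Real.rpow_le_rpow ht0.le ht.2 (by linarith : (0:ℝ) ≤ γ - 1)
        have hm0 : (0:ℝ) ≤ m ^ (γ - 1) := Real.rpow_nonneg hm.le _
        linarith
    have habs : |γ * t ^ (γ - 1)| = γ * t ^ (γ - 1) := by
      rw [abs_of_nonneg]
      positivity
    rw [habs]
    have := mul_le_mul_of_nonneg_left h1 hγ.le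
    linarith
  have := Convex.norm_image_sub_le_of_norm_deriv_le hdiff bound (convex_Icc m M₀) hb ha
  simpa [Real.norm_eq_abs] using this

set_option maxHeartbeats 1000000 in
/-- Bounds on the geometric deviation factor `q_α(x) = 1 − φ(|x|/α)`,
where `φ(s) = (s/A(s))^γ` for `s > 0` and `φ(0) = 1`, for a warping function `A`
that is smooth, odd, with `A'(0) = 1` and `A(r) ≳ r` for `r > 0`. -/
theorem q_alpha_bounds (d : ℕ) (hd : 2 ≤ d)
    (A : ℝ → ℝ) (hA : ContDiff ℝ (⊤ : ℕ∞) A) (hodd : ∀ r : ℝ, A (-r) = -A r)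
    (hA0 : deriv A 0 = 1)
    (c : ℝ) (hc : 0 < c) (hgrow : ∀ r > (0 : ℝ), c * r ≤ A r)
    (γ : ℝ) (hγ : 0 < γ)
    (φ : ℝ → ℝ) (hφ : ∀ s > (0 : ℝ), φ s = (s / A s) ^ γ) (hφ0 : φ 0 = 1) :
    ∃ C > (0 : ℝ), ∀ α : ℝ, 1 ≤ α → ∀ x : EuclideanSpace ℝ (Fin d),
      (|1 - φ (‖x‖ / α)| ≤ C) ∧
      (‖x‖ ≤ Real.sqrt α → |1 - φ (‖x‖ / α)| ≤ C * α⁻¹) ∧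
      (∀ M > (0 : ℝ), ∀ w : EuclideanSpace ℝ (Fin d) → ℝ,
        (∀ y : EuclideanSpace ℝ (Fin d), |w y| ≤ M * (1 + ‖y‖ ^ 2)⁻¹) →
        |(1 - φ (‖x‖ / α)) * w x| ≤ C * M * α⁻¹) := by
  -- basic facts about A
  have hA00 : A 0 = 0 := by have := hodd 0; simp at this; linarith
  have hAinf : ContDiff ℝ (↑(⊤:ℕ∞)) A := hA.of_le (by simp)
  have hAdiff : Differentiable ℝ A := hAinf.differentiable (by simp)
  have hA' : ContDiff ℝ (↑(⊤:ℕ∞)) (deriv A) := (contDiff_infty_iff_deriv.mp hAinf).2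
  have hA'diff : Differentiable ℝ (deriv A) := hA'.differentiable (by simp)
  have hA'' : ContDiff ℝ (↑(⊤:ℕ∞)) (deriv (deriv A)) := (contDiff_infty_iff_deriv.mp hA').2
  have hA''diff : Differentiable ℝ (deriv (deriv A)) := hA''.differentiable (by simp)
  have hA''' : Continuous (deriv (deriv (deriv A))) :=
    ((contDiff_infty_iff_deriv.mp hA'').2).continuous
  -- deriv A is even
  have heven : ∀ r : ℝ, deriv A (-r) = deriv A r := by
    intro r
    have h1 : deriv (fun x => A (-x)) r = -deriv A (-r) := deriv_comp_neg _ _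
    have h2 : (fun x => A (-x)) = fun x => -A x := funext hodd
    rw [h2, deriv.fun_neg] at h1
    linarith
  -- deriv (deriv A) is odd, hence 0 at 0
  have hA''0 : deriv (deriv A) 0 = 0 := by
    have h1 : deriv (fun x => deriv A (-x)) 0 = -deriv (deriv A) (-0) := deriv_comp_neg _ _
    have h2 : (fun x => deriv A (-x)) = deriv A := funext heven
    rw [h2] at h1
    simp at h1
    linarith
  -- bound on third derivative on [0,1]
  obtain ⟨L, hL⟩ : ∃ L : ℝ, ∀ t ∈ Icc (0:ℝ) 1, ‖deriv (deriv (deriv A)) t‖ ≤ L :=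
    isCompact_Icc.exists_bound_of_continuousOn hA'''.continuousOn
  have hL0 : 0 ≤ L := le_trans (norm_nonneg _) (hL 0 ⟨le_refl 0, zero_le_one⟩)
  -- |A'' t| ≤ L t on [0,1]
  have h2bd : ∀ t ∈ Icc (0:ℝ) 1, |deriv (deriv A) t| ≤ L * t := by
    intro t ht
    have := norm_image_sub_le_of_norm_deriv_le_segment'
      (f := deriv (deriv A)) (f' := deriv (deriv (deriv A))) (a := 0) (b := t)
      (fun y hy => (hA''diff y).hasDerivAt.hasDerivWithinAt)
      (fun y hy => hL y ⟨hy.1, le_trans hy.2.le ht.2⟩) t ⟨ht.1, le_refl t⟩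
    simpa [hA''0, Real.norm_eq_abs] using this
  -- |A' t - 1| ≤ L t² on [0,1]
  have h1bd : ∀ t ∈ Icc (0:ℝ) 1, |deriv A t - 1| ≤ L * t ^ 2 := by
    intro t ht
    have := norm_image_sub_le_of_norm_deriv_le_segment'
      (f := deriv A) (f' := deriv (deriv A)) (a := 0) (b := t) (C := L * t)
      (fun y hy => (hA'diff y).hasDerivAt.hasDerivWithinAt)
      (fun y hy => by
        have h0 := h2bd y ⟨hy.1, le_trans hy.2.le ht.2⟩
        have : L * y ≤ L * t := mul_le_mul_of_nonneg_left hy.2.le hL0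
        rw [Real.norm_eq_abs]; linarith) t ⟨ht.1, le_refl t⟩
    rw [hA0, Real.norm_eq_abs] at this
    calc |deriv A t - 1| ≤ L * t * (t - 0) := this
    _ = L * t ^ 2 := by ring
  -- |A s - s| ≤ L s³ on [0,1]
  have h0bd : ∀ s ∈ Icc (0:ℝ) 1, |A s - s| ≤ L * s ^ 3 := by
    intro s hs
    have := norm_image_sub_le_of_norm_deriv_le_segment'
      (f := fun t => A t - t) (f' := fun t => deriv A t - 1) (a := 0) (b := s)
      (C := L * s ^ 2)
      (fun y hy => ((hAdiff y).hasDerivAt.sub (hasDerivAt_id y)).hasDerivWithinAt)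
      (fun y hy => by
        have h0 := h1bd y ⟨hy.1, le_trans hy.2.le hs.2⟩
        have : L * y ^ 2 ≤ L * s ^ 2 := by
          apply mul_le_mul_of_nonneg_left _ hL0
          exact pow_le_pow_left₀ hy.1 hy.2.le 2
        rw [Real.norm_eq_abs]; linarith) s ⟨hs.1, le_refl s⟩
    simp only [Real.norm_eq_abs, hA00, sub_zero] at this
    calc |A s - s| ≤ L * s ^ 2 * s := this
    _ = L * s ^ 3 := by ring
  -- constants
  set m : ℝ := (1 + L)⁻¹ with hm_def
  set M₀ : ℝ := max c⁻¹ 1 with hM₀_def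
  have hm0 : 0 < m := by positivity
  have hm1 : m ≤ 1 := by
    rw [hm_def]
    rw [inv_le_one₀ (by linarith : (0:ℝ) < 1 + L)]
    linarith
  have hM₀1 : 1 ≤ M₀ := le_max_right _ _
  have hmM : m ≤ M₀ := le_trans hm1 hM₀1
  set K : ℝ := γ * (m ^ (γ - 1) + M₀ ^ (γ - 1)) with hK_def
  have hK0 : 0 ≤ K := by positivity
  -- uniform bound constant
  set C₁ : ℝ := 1 + c⁻¹ ^ γ with hC₁_def
  have hC₁0 : 0 < C₁ := by positivity
  -- quadratic bound constant
  set C₂ : ℝ := K * (L / c) with hC₂_def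
  have hC₂0 : 0 ≤ C₂ := by positivity
  -- uniform bound on |1 - φ s| for s ≥ 0
  have hunif : ∀ s : ℝ, 0 ≤ s → |1 - φ s| ≤ C₁ := by
    intro s hs
    rcases eq_or_lt_of_le hs with h | h
    · rw [← h, hφ0]; simp; positivity
    · have hAs : 0 < A s := lt_of_lt_of_le (by positivity) (hgrow s h)
      have hu0 : 0 ≤ s / A s := by positivity
      have hu2 : s / A s ≤ c⁻¹ := by
        rw [div_le_iff₀ hAs]
        have := hgrow s h
        rw [inv_mul_eq_div, le_div_iff₀ hc]
        linarith
      rw [hφ s h]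
      have h1 : (0:ℝ) ≤ (s / A s) ^ γ := Real.rpow_nonneg hu0 _
      have h2 : (s / A s) ^ γ ≤ c⁻¹ ^ γ := Real.rpow_le_rpow hu0 hu2 hγ.le
      rw [abs_le]
      constructor <;> [skip; skip] <;> rw [hC₁_def] <;> nlinarith [Real.rpow_nonneg (le_of_lt (inv_pos.mpr hc)) γ]
  -- quadratic bound on |1 - φ s| for s ∈ [0,1]
  have hquad : ∀ s : ℝ, 0 ≤ s → s ≤ 1 → |1 - φ s| ≤ C₂ * s ^ 2 := by
    intro s hs0 hs1
    rcases eq_or_lt_of_le hs0 with h | h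
    · rw [← h, hφ0]; norm_num
    · have hAs : 0 < A s := lt_of_lt_of_le (by positivity) (hgrow s h)
      have hcube : |A s - s| ≤ L * s ^ 3 := h0bd s ⟨hs0, hs1⟩
      have hAub : A s ≤ (1 + L) * s := by
        have h3 : s ^ 3 ≤ s := by
          nlinarith [mul_nonneg (mul_nonneg h.le (sub_nonneg.mpr hs1)) (by linarith : (0:ℝ) ≤ 1 + s)]
        have : A s - s ≤ L * s ^ 3 := le_trans (le_abs_self _) hcube
        nlinarith
      set u : ℝ := s / A s with hu_def
      have hu0 : 0 < u := by positivity
      have hum : m ≤ u := by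
        rw [hu_def, le_div_iff₀ hAs]
        have h4 : m * A s ≤ m * ((1 + L) * s) := mul_le_mul_of_nonneg_left hAub hm0.le
        have h5 : m * ((1 + L) * s) = s := by
          rw [hm_def]; field_simp
        linarith
      have huM : u ≤ M₀ := by
        have hu2 : u ≤ c⁻¹ := by
          rw [hu_def, div_le_iff₀ hAs]
          have := hgrow s h
          rw [inv_mul_eq_div, le_div_iff₀ hc]
          linarith
        exact le_trans hu2 (le_max_left _ _)
      have hud : |u - 1| ≤ (L / c) * s ^ 2 := by
        have heq : u - 1 = (s - A s) / A s := by
          rw [hu_def]; field_simp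
        rw [heq, abs_div, abs_of_pos hAs]
        rw [div_le_iff₀ hAs]
        have h1 : |s - A s| = |A s - s| := abs_sub_comm _ _
        have h2 : c * s ≤ A s := hgrow s h
        have h3 : L / c * s ^ 2 * (c * s) ≤ L / c * s ^ 2 * A s := by
          apply mul_le_mul_of_nonneg_left h2
          positivity
        have h4 : L / c * s ^ 2 * (c * s) = L * s ^ 3 := by
          field_simp
        rw [h1]
        linarith
      have hlip := rpow_lipschitz hγ hm0 hmM ⟨hum, huM⟩ ⟨hm1, hM₀1⟩ (a := u) (b := 1)
      rw [Real.one_rpow] at hlip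
      rw [hφ s h, ← hu_def]
      rw [abs_sub_comm]
      calc |u ^ γ - 1| ≤ K * |u - 1| := hlip
      _ ≤ K * ((L / c) * s ^ 2) := mul_le_mul_of_nonneg_left hud hK0
      _ = C₂ * s ^ 2 := by rw [hC₂_def]; ring
  -- final constant
  refine ⟨C₁ + C₂ + 1, by positivity, fun α hα x => ?_⟩
  have hα0 : 0 < α := lt_of_lt_of_le one_pos hα
  set s : ℝ := ‖x‖ / α with hs_def
  have hs0 : 0 ≤ s := by positivity
  have hsmall : ‖x‖ ≤ Real.sqrt α → |1 - φ s| ≤ (C₁ + C₂ + 1) * α⁻¹ := by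
    intro hx
    have hs1 : s ≤ 1 := by
      rw [hs_def, div_le_one hα0]
      calc ‖x‖ ≤ Real.sqrt α := hx
      _ ≤ α := by
        nlinarith [Real.sq_sqrt hα0.le, Real.sqrt_nonneg α, Real.sqrt_le_sqrt hα,
          Real.sqrt_one]
    have hq := hquad s hs0 hs1
    have hs2 : s ^ 2 ≤ α⁻¹ := by
      rw [hs_def, div_pow]
      rw [div_le_iff₀ (by positivity)]
      have h1 : ‖x‖ ^ 2 ≤ α := by
        nlinarith [Real.sq_sqrt hα0.le, norm_nonneg x, Real.sqrt_nonneg α]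
      calc ‖x‖ ^ 2 ≤ α := h1
      _ = α⁻¹ * α ^ 2 := by field_simp
    calc |1 - φ s| ≤ C₂ * s ^ 2 := hq
    _ ≤ C₂ * α⁻¹ := mul_le_mul_of_nonneg_left hs2 hC₂0
    _ ≤ (C₁ + C₂ + 1) * α⁻¹ := by
      apply mul_le_mul_of_nonneg_right _ (by positivity)
      linarith
  refine ⟨le_trans (hunif s hs0) (by linarith), hsmall, ?_⟩
  intro M hM w hw
  rcases le_or_gt ‖x‖ (Real.sqrt α) with hx | hx
  · have h1 := hsmall hx
    have h2 : |w x| ≤ M := by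
      calc |w x| ≤ M * (1 + ‖x‖ ^ 2)⁻¹ := hw x
      _ ≤ M * 1 := by
        apply mul_le_mul_of_nonneg_left _ hM.le
        rw [inv_le_one_iff₀]
        right
        nlinarith [norm_nonneg x]
      _ = M := mul_one M
    rw [abs_mul]
    calc |1 - φ s| * |w x| ≤ ((C₁ + C₂ + 1) * α⁻¹) * M :=
      mul_le_mul h1 h2 (abs_nonneg _) (by positivity)
    _ = (C₁ + C₂ + 1) * M * α⁻¹ := by ring
  · have h1 := hunif s hs0
    have h2 : |w x| ≤ M * α⁻¹ := by
      calc |w x| ≤ M * (1 + ‖x‖ ^ 2)⁻¹ := hw x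
      _ ≤ M * α⁻¹ := by
        apply mul_le_mul_of_nonneg_left _ hM.le
        apply inv_anti₀ hα0
        nlinarith [Real.sq_sqrt hα0.le, Real.sqrt_nonneg α, norm_nonneg x]
    rw [abs_mul]
    calc |1 - φ s| * |w x| ≤ C₁ * (M * α⁻¹) :=
      mul_le_mul h1 h2 (abs_nonneg _) hC₁0.le
    _ ≤ (C₁ + C₂ + 1) * M * α⁻¹ := by
      have : 0 < M * α⁻¹ := by positivity
      nlinarith
end

section
/- Let H be a real inner product space, D ⊆ H a linear subspace, and L : D → H a linear map which is symmetric on D, i.e. ⟨Lx, y⟩ = ⟨x, Ly⟩ for all x, y ∈ D. Suppose R ∈ D with R ≠ 0, suppose u ∈ D satisfies L u = R with ⟨u, R⟩ > 0, and suppose ⟨L R, R⟩ ≤ 0. Then the vector f := u − (⟨u, R⟩/‖R‖²) R belongs to D, satisfies ⟨f, R⟩ = 0, and ⟨L f, f⟩ < 0. -/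
open RealInnerProductSpace

/-! Expanding the quadratic form of the symmetric `L` at `f = u - c R`, and using
`⟪L R, u⟫ = ⟪R, L u⟫ = ‖R‖²`, gives
`⟪L f, f⟫ = ⟪u, R⟫ - 2 c ‖R‖² + c² ⟪L R, R⟫ = -⟪u, R⟫ + c² ⟪L R, R⟫ < 0`
for `c = ⟪u, R⟫ / ‖R‖²`. -/

theorem real_inner_sub_inner_div_norm_sq_smul_self {H : Type*} [NormedAddCommGroup H]
    [InnerProductSpace ℝ H] (x y : H) :
    ⟪x - (⟪x, y⟫ / ‖y‖ ^ 2) • y, y⟫ = 0 := by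
  rcases eq_or_ne y 0 with rfl | hy
  · simp
  · rw [inner_sub_left, real_inner_smul_left, real_inner_self_eq_norm_sq,
      div_mul_cancel₀ _ (by positivity), sub_self]

theorem inner_map_sub_smul_sub_smul_of_symm {H : Type*} [NormedAddCommGroup H]
    [InnerProductSpace ℝ H] {D : Submodule ℝ H} {L : D →ₗ[ℝ] H}
    (hsym : ∀ x y : D, ⟪L x, (y : H)⟫ = ⟪(x : H), L y⟫) (x y : D) (c : ℝ) :
    ⟪L (x - c • y), ((x - c • y : D) : H)⟫ =
      ⟪L x, (x : H)⟫ - 2 * c * ⟪L x, (y : H)⟫ + c ^ 2 * ⟪L y, (y : H)⟫ := by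
  have hyx : ⟪L y, (x : H)⟫ = ⟪L x, (y : H)⟫ := by rw [hsym, real_inner_comm]
  simp only [map_sub, map_smul, Submodule.coe_sub, Submodule.coe_smul, inner_sub_left,
    inner_sub_right, real_inner_smul_left, real_inner_smul_right, hyx]
  ring

theorem vk_negative_direction_general {H : Type*} [NormedAddCommGroup H] [InnerProductSpace ℝ H]
    (D : Submodule ℝ H) (L : D →ₗ[ℝ] H)
    (hsym : ∀ x y : D, ⟪L x, (y : H)⟫ = ⟪(x : H), L y⟫)
    (R : D)
    (u : D) (hu : L u = (R : H)) (huR : 0 < ⟪(u : H), (R : H)⟫)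
    (hLR : ⟪L R, (R : H)⟫ ≤ 0) :
    ⟪((u - (⟪(u : H), (R : H)⟫ / ‖(R : H)‖ ^ 2) • R : D) : H), (R : H)⟫ = 0 ∧
    ⟪L (u - (⟪(u : H), (R : H)⟫ / ‖(R : H)‖ ^ 2) • R),
      ((u - (⟪(u : H), (R : H)⟫ / ‖(R : H)‖ ^ 2) • R : D) : H)⟫ < 0 := by
  set c : ℝ := ⟪(u : H), (R : H)⟫ / ‖(R : H)‖ ^ 2
  have hR : (R : H) ≠ 0 := fun h => by simp [h] at huR
  have hcR : c * ‖(R : H)‖ ^ 2 = ⟪(u : H), (R : H)⟫ := div_mul_cancel₀ _ (by positivity)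
  refine ⟨by simpa only [Submodule.coe_sub, Submodule.coe_smul]
    using real_inner_sub_inner_div_norm_sq_smul_self (u : H) R, ?_⟩
  rw [inner_map_sub_smul_sub_smul_of_symm hsym, hu, real_inner_comm,
    real_inner_self_eq_norm_sq]
  have hquad : c ^ 2 * ⟪L R, (R : H)⟫ ≤ 0 := mul_nonpos_of_nonneg_of_nonpos (sq_nonneg c) hLR
  linarith

/-- The algebraic core of the Vakhitov–Kolokolov instability criterion: if `L` is
symmetric on `D`, `Lu = R` with `⟨u,R⟩ > 0`, and `⟨LR,R⟩ ≤ 0`, then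
`f = u − (⟨u,R⟩/‖R‖²)R` is orthogonal to `R` and `⟨Lf,f⟩ < 0`. -/
theorem vk_negative_direction {H : Type*} [NormedAddCommGroup H] [InnerProductSpace ℝ H]
    (D : Submodule ℝ H) (L : D →ₗ[ℝ] H)
    (hsym : ∀ x y : D, ⟪L x, (y : H)⟫ = ⟪(x : H), L y⟫)
    (R : D) (hR : (R : H) ≠ 0)
    (u : D) (hu : L u = (R : H)) (huR : 0 < ⟪(u : H), (R : H)⟫)
    (hLR : ⟪L R, (R : H)⟫ ≤ 0) :
    ⟪((u - (⟪(u : H), (R : H)⟫ / ‖(R : H)‖ ^ 2) • R : D) : H), (R : H)⟫ = 0 ∧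
    ⟪L (u - (⟪(u : H), (R : H)⟫ / ‖(R : H)‖ ^ 2) • R),
      ((u - (⟪(u : H), (R : H)⟫ / ‖(R : H)‖ ^ 2) • R : D) : H)⟫ < 0 :=
  vk_negative_direction_general D L hsym R u hu huR hLR
end
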